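/- In the adversarial highway model, the conditional distribution of the action given the covariate W satisfies P(X = true | W = true) = 1 and P(X = true | W = false) = (3 − sqrt(5))/2. (Both conditionals are well-defined since P(W = true) = p^2 and P(W = false) = 1 − p^2 are strictly between 0 and 1.) -/

import Mathlib

/-!
Adversarial highway model: `p := (√5 − 1)/2`; `L` and `U` independent Bool-valued with
`P(L = true) = P(U = true) = p`; `W := L AND U`, `X := L`, `Y := X XOR U`.
STATEMENT 13: `P(X = true | W = true) = 1` and `P(X = true | W = false) = (3 − √5)/2`;
both conditionals are well-defined since `P(W = true)` and `P(W = false)` are strictly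
between `0` and `1`.
-/

open scoped ENNReal

/-- `p := (√5 − 1)/2` as an extended nonnegative real. -/
noncomputable def pAdv : ℝ≥0∞ := ENNReal.ofReal ((Real.sqrt 5 - 1) / 2)

lemma pAdv_le_one : pAdv ≤ 1 := by
  rw [pAdv, ENNReal.ofReal_le_one]
  nlinarith [Real.sq_sqrt (show (0:ℝ) ≤ 5 by norm_num), Real.sqrt_nonneg 5]

/-- Joint law of `(L, U)`: independent Bernoulli(`p`) bits. -/
noncomputable def advBase : PMF (Bool × Bool) := do
  let l ← PMF.bernoulli pAdv.toNNReal (by simpa using ENNReal.toNNReal_mono ENNReal.one_ne_top pAdv_le_one)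
  let u ← PMF.bernoulli pAdv.toNNReal (by simpa using ENNReal.toNNReal_mono ENNReal.one_ne_top pAdv_le_one)
  pure (l, u)

/-- Marginal law of `W := L AND U`. -/
noncomputable def advW : PMF Bool := advBase.map fun lu => lu.1 && lu.2

/-- Joint law of `(X, W)` with `X := L` and `W := L AND U`. -/
noncomputable def advXW : PMF (Bool × Bool) := advBase.map fun lu => (lu.1, lu.1 && lu.2)

lemma advBase_eq : advBase = (PMF.bernoulli pAdv.toNNReal (by simpa using ENNReal.toNNReal_mono ENNReal.one_ne_top pAdv_le_one)).bind
    (fun l => (PMF.bernoulli pAdv.toNNReal (by simpa using ENNReal.toNNReal_mono ENNReal.one_ne_top pAdv_le_one)).bind (fun u => PMF.pure (l, u))) := rfl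

lemma advBase_apply (l u : Bool) :
    advBase (l, u) = (cond l pAdv (1 - pAdv)) * (cond u pAdv (1 - pAdv)) := by
  rw [advBase_eq]
  simp [PMF.bind_apply, PMF.bernoulli, tsum_bool, PMF.pure_apply, Prod.ext_iff]
  cases l <;> cases u <;> simp [ENNReal.coe_toNNReal (ne_top_of_le_ne_top ENNReal.one_ne_top pAdv_le_one)]

lemma advW_true : advW true = pAdv * pAdv := by
  simp [advW, PMF.map_apply, ENNReal.tsum_prod', tsum_bool, advBase_apply, Fintype.sum_prod_type, Fintype.sum_bool]

lemma advW_false : advW false =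
    (1 - pAdv) * (1 - pAdv) + (1 - pAdv) * pAdv + pAdv * (1 - pAdv) := by
  simp [advW, PMF.map_apply, ENNReal.tsum_prod', tsum_bool, advBase_apply, Fintype.sum_prod_type, Fintype.sum_bool]
  ring

lemma advXW_tt : advXW (true, true) = pAdv * pAdv := by
  simp [advXW, PMF.map_apply, ENNReal.tsum_prod', tsum_bool, advBase_apply, Prod.ext_iff, Fintype.sum_prod_type, Fintype.sum_bool]

lemma advXW_tf : advXW (true, false) = pAdv * (1 - pAdv) := by
  simp [advXW, PMF.map_apply, ENNReal.tsum_prod', tsum_bool, advBase_apply, Prod.ext_iff, Fintype.sum_prod_type, Fintype.sum_bool]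

theorem adv_conditional_given_W :
    (∀ w : Bool, 0 < advW w ∧ advW w < 1) ∧
    advXW (true, true) / advW true = 1 ∧
    advXW (true, false) / advW false = ENNReal.ofReal ((3 - Real.sqrt 5) / 2) := by
  set r : ℝ := (Real.sqrt 5 - 1) / 2 with hrdef
  have hs : Real.sqrt 5 ^ 2 = 5 := Real.sq_sqrt (by norm_num)
  have hs0 : (0:ℝ) ≤ Real.sqrt 5 := Real.sqrt_nonneg 5
  have hs2 : (2:ℝ) < Real.sqrt 5 := by nlinarith
  have hr0 : (0:ℝ) < r := by rw [hrdef]; linarith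
  have hr1 : r < 1 := by rw [hrdef]; nlinarith
  have h1p : 1 - pAdv = ENNReal.ofReal (1 - r) := by
    rw [pAdv, ← hrdef, ← ENNReal.ofReal_one, ← ENNReal.ofReal_sub _ hr0.le]
  have hp : pAdv = ENNReal.ofReal r := by rw [pAdv, hrdef]
  have hWt : advW true = ENNReal.ofReal (r * r) := by
    rw [advW_true, hp, ENNReal.ofReal_mul hr0.le]
  have hWf : advW false = ENNReal.ofReal (1 - r * r) := by
    rw [advW_false, h1p, hp, ← ENNReal.ofReal_mul (by linarith), ← ENNReal.ofReal_mul (by linarith),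
      ← ENNReal.ofReal_mul hr0.le, ← ENNReal.ofReal_add (by nlinarith) (by nlinarith),
      ← ENNReal.ofReal_add (by nlinarith) (by nlinarith)]
    ring_nf
  refine ⟨?_, ?_, ?_⟩
  · intro w
    cases w
    · rw [hWf]
      exact ⟨ENNReal.ofReal_pos.mpr (by nlinarith), ENNReal.ofReal_lt_one.mpr (by nlinarith)⟩
    · rw [hWt]
      exact ⟨ENNReal.ofReal_pos.mpr (by nlinarith), ENNReal.ofReal_lt_one.mpr (by nlinarith)⟩
  · rw [advXW_tt, ← advW_true, hWt]
    exact ENNReal.div_self (by simp; nlinarith) (by simp)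
  · rw [advXW_tf, h1p, hp, ← ENNReal.ofReal_mul hr0.le, hWf,
      ← ENNReal.ofReal_div_of_pos (by nlinarith)]
    congr 1
    rw [div_eq_iff (by nlinarith : 1 - r * r ≠ 0), hrdef]
    nlinarith
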